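/- Let Ω ⊆ ℝⁿ be open and bounded, I ∈ L²(Ω), and let p : Ω → ℝ be measurable with 1 < p_min ≤ p(x) ≤ 2. Define E(v) = ∫_Ω (|∇v(x)|^{p(x)}/p(x) + (v(x) − I(x))²/2) dx on W^{1,p(·)}(Ω) ∩ L²(Ω). Then E is convex, and if u is a minimizer of E in its natural domain, then u satisfies the Euler–Lagrange equation in the weak sense: ∫_Ω |∇u|^{p(x)−2} ∇u · ∇φ dx + ∫_Ω (u − I) φ dx = 0 for all φ ∈ C_0^∞(Ω); i.e., Δ_{p(x)} u = u − I weakly in Ω. -/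

import Mathlib

open MeasureTheory
open scoped RealInnerProductSpace


section Helpers

variable {E : Type*} [NormedAddCommGroup E] [InnerProductSpace ℝ E]

lemma clr_norm_combo_rpow_le (a b : E) {q s t : ℝ} (hq : 1 ≤ q) (hs : 0 ≤ s) (ht : 0 ≤ t)
    (hst : s + t = 1) : ‖s • a + t • b‖ ^ q ≤ s * ‖a‖ ^ q + t * ‖b‖ ^ q := by
  have h1 : ‖s • a + t • b‖ ≤ s * ‖a‖ + t * ‖b‖ := by
    calc ‖s • a + t • b‖ ≤ ‖s • a‖ + ‖t • b‖ := norm_add_le _ _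
    _ = s * ‖a‖ + t * ‖b‖ := by
        rw [norm_smul, norm_smul, Real.norm_of_nonneg hs, Real.norm_of_nonneg ht]
  have h2 : ‖s • a + t • b‖ ^ q ≤ (s * ‖a‖ + t * ‖b‖) ^ q :=
    Real.rpow_le_rpow (norm_nonneg _) h1 (by linarith)
  refine h2.trans ?_
  have := (convexOn_rpow hq).2 (Set.mem_Ici.2 (norm_nonneg a)) (Set.mem_Ici.2 (norm_nonneg b))
    hs ht hst
  simpa [smul_eq_mul] using this

lemma clr_rpow_le_one_add {b e : ℝ} (hb : 0 ≤ b) (he0 : 0 ≤ e) (he1 : e ≤ 1) :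
    b ^ e ≤ 1 + b := by
  rcases le_total b 1 with h | h
  · exact (Real.rpow_le_one hb h he0).trans (by linarith)
  · calc b ^ e ≤ b ^ (1 : ℝ) := Real.rpow_le_rpow_of_exponent_le h he1
    _ = b := Real.rpow_one b
    _ ≤ 1 + b := by linarith

lemma clr_rpow_add_le {a c q : ℝ} (ha : 0 ≤ a) (hc : 0 ≤ c) (hq1 : 1 ≤ q) (hq2 : q ≤ 2) :
    (a + c) ^ q ≤ 4 * a ^ q + 4 + 4 * c ^ 2 := by
  have hq0 : 0 ≤ q := by linarith
  have h1 : a + c ≤ 2 * max a c := by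
    rcases le_total a c with h | h
    · have : max a c = c := max_eq_right h
      rw [this]; linarith
    · have : max a c = a := max_eq_left h
      rw [this]; linarith
  have hmax : 0 ≤ max a c := le_max_of_le_left ha
  have h2 : (a + c) ^ q ≤ (2 * max a c) ^ q := Real.rpow_le_rpow (by linarith) h1 hq0
  have h3 : (2 * max a c) ^ q = 2 ^ q * (max a c) ^ q :=
    Real.mul_rpow (by norm_num) hmax
  have h4 : (2:ℝ) ^ q ≤ 2 ^ (2:ℝ) := Real.rpow_le_rpow_of_exponent_le one_le_two hq2
  have h5 : (2:ℝ) ^ (2:ℝ) = 4 := by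
    rw [show (2:ℝ) = ((2:ℕ):ℝ) by norm_num, Real.rpow_natCast]; norm_num
  have h6 : (max a c) ^ q ≤ a ^ q + c ^ q := by
    rcases le_total a c with h | h
    · rw [max_eq_right h]
      have : 0 ≤ a ^ q := Real.rpow_nonneg ha q
      linarith
    · rw [max_eq_left h]
      have : 0 ≤ c ^ q := Real.rpow_nonneg hc q
      linarith
  have h7 : c ^ q ≤ 1 + c ^ 2 := by
    rcases le_total c 1 with h | h
    · have := Real.rpow_le_one hc h hq0
      have h8 : 0 ≤ c ^ 2 := sq_nonneg c
      nlinarith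
    · have h9 : c ^ q ≤ c ^ 2 := by
        have h9' := Real.rpow_le_rpow_of_exponent_le h hq2
        rwa [show (2:ℝ) = ((2:ℕ):ℝ) by norm_num, Real.rpow_natCast] at h9'
      linarith
  have haq : 0 ≤ a ^ q := Real.rpow_nonneg ha q
  have hcq : 0 ≤ c ^ q := Real.rpow_nonneg hc q
  have h2q : (0:ℝ) ≤ 2 ^ q := Real.rpow_nonneg (by norm_num) q
  calc (a + c) ^ q ≤ 2 ^ q * (max a c) ^ q := by rw [← h3]; exact h2
  _ ≤ 4 * (max a c) ^ q := by
      apply mul_le_mul_of_nonneg_right _ (Real.rpow_nonneg hmax q)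
      rw [← h5]; exact h4
  _ ≤ 4 * (a ^ q + c ^ q) := by linarith
  _ ≤ 4 * a ^ q + 4 + 4 * c ^ 2 := by nlinarith

lemma clr_inner_bound {q : ℝ} (hq : 1 < q) (y z : E) :
    ‖y‖ ^ (q - 2) * |⟪y, z⟫| ≤ ‖y‖ ^ (q - 1) * ‖z‖ := by
  rcases eq_or_ne y 0 with rfl | hy
  · simp [Real.zero_rpow (by linarith : q - 1 ≠ 0)]
  · have hpos : (0:ℝ) < ‖y‖ := norm_pos_iff.2 hy
    calc ‖y‖ ^ (q - 2) * |⟪y, z⟫| ≤ ‖y‖ ^ (q - 2) * (‖y‖ * ‖z‖) := by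
          exact mul_le_mul_of_nonneg_left (abs_real_inner_le_norm y z)
            (Real.rpow_nonneg hpos.le _)
    _ = ‖y‖ ^ (q - 1) * ‖z‖ := by
        rw [show q - 1 = (q - 2) + 1 by ring, Real.rpow_add hpos, Real.rpow_one]; ring

end Helpers

section Grad

variable {n : ℕ}

lemma clr_measurable_gradient (f : EuclideanSpace ℝ (Fin n) → ℝ) :
    Measurable (gradient f) :=
  ((InnerProductSpace.toDual ℝ (EuclideanSpace ℝ (Fin n))).symm.continuous.measurable).comp
    (measurable_fderiv ℝ f)

lemma clr_gradient_add_smul {u φ : EuclideanSpace ℝ (Fin n) → ℝ} {x : EuclideanSpace ℝ (Fin n)}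
    (hu : DifferentiableAt ℝ u x) (hφ : DifferentiableAt ℝ φ x) (c : ℝ) :
    gradient (fun y => u y + c * φ y) x = gradient u x + c • gradient φ x := by
  unfold gradient
  rw [fderiv_fun_add hu (hφ.const_mul c), fderiv_const_mul hφ, map_add, _root_.map_smul]

lemma clr_gradient_combo {v w : EuclideanSpace ℝ (Fin n) → ℝ} {x : EuclideanSpace ℝ (Fin n)}
    (hv : DifferentiableAt ℝ v x) (hw : DifferentiableAt ℝ w x) (s t : ℝ) :
    gradient (fun y => s * v y + t * w y) x = s • gradient v x + t • gradient w x := by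
  unfold gradient
  rw [fderiv_fun_add (hv.const_mul s) (hw.const_mul t), fderiv_const_mul hv, fderiv_const_mul hw,
    map_add, _root_.map_smul, _root_.map_smul]

lemma clr_gradient_compact_support {φ : EuclideanSpace ℝ (Fin n) → ℝ} (h : HasCompactSupport φ) :
    HasCompactSupport (gradient φ) := by
  have := (h.fderiv (𝕜 := ℝ)).comp_left
    (g := (InnerProductSpace.toDual ℝ (EuclideanSpace ℝ (Fin n))).symm) (map_zero _)
  exact this

lemma clr_gradient_continuous {φ : EuclideanSpace ℝ (Fin n) → ℝ} (h : ContDiff ℝ (⊤ : ℕ∞) φ) :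
    Continuous (gradient φ) :=
  (InnerProductSpace.toDual ℝ (EuclideanSpace ℝ (Fin n))).symm.continuous.comp
    (h.continuous_fderiv (by simp))

lemma clr_density_aesm {Ω : Set (EuclideanSpace ℝ (Fin n))} {p I v : EuclideanSpace ℝ (Fin n) → ℝ}
    (hp : Measurable p) (hI : AEStronglyMeasurable I (volume.restrict Ω))
    (hv : Differentiable ℝ v) :
    AEStronglyMeasurable (fun x => ‖gradient v x‖ ^ p x / p x + (v x - I x) ^ 2 / 2)
      (volume.restrict Ω) := by
  have h1 : Measurable fun x => ‖gradient v x‖ ^ p x / p x :=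
    ((clr_measurable_gradient v).norm.pow hp).div hp
  have hsub := hv.continuous.aestronglyMeasurable.sub hI
  have h2 : AEStronglyMeasurable (fun x => (v x - I x) ^ 2 / 2) (volume.restrict Ω) := by
    simp only [pow_two, div_eq_mul_inv]
    exact (hsub.mul hsub).mul_const _
  exact h1.aestronglyMeasurable.add h2

lemma clr_integrable_left {α : Type*} [MeasurableSpace α] {μ : Measure α} {f g : α → ℝ}
    (hf : AEStronglyMeasurable f μ) (hf0 : ∀ᵐ x ∂μ, 0 ≤ f x) (hg0 : ∀ᵐ x ∂μ, 0 ≤ g x)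
    (h : Integrable (fun x => f x + g x) μ) : Integrable f μ := by
  refine h.mono' hf ?_
  filter_upwards [hf0, hg0] with x h1 h2
  rw [Real.norm_of_nonneg h1]; linarith

lemma clr_integrable_right {α : Type*} [MeasurableSpace α] {μ : Measure α} {f g : α → ℝ}
    (hg : AEStronglyMeasurable g μ) (hf0 : ∀ᵐ x ∂μ, 0 ≤ f x) (hg0 : ∀ᵐ x ∂μ, 0 ≤ g x)
    (h : Integrable (fun x => f x + g x) μ) : Integrable g μ := by
  refine h.mono' hg ?_
  filter_upwards [hf0, hg0] with x h1 h2
  rw [Real.norm_of_nonneg h2]; linarith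

end Grad


/-- The Chen–Levine–Rao image restoration energy. -/
noncomputable def clrEnergy {n : ℕ} (Ω : Set (EuclideanSpace ℝ (Fin n)))
    (p I : EuclideanSpace ℝ (Fin n) → ℝ) (v : EuclideanSpace ℝ (Fin n) → ℝ) : ℝ :=
  ∫ x in Ω, (‖gradient v x‖ ^ (p x) / p x + (v x - I x) ^ 2 / 2)

set_option maxHeartbeats 1000000

theorem image_restoration_model {n : ℕ} (Ω : Set (EuclideanSpace ℝ (Fin n)))
    (hΩo : IsOpen Ω) (hΩb : Bornology.IsBounded Ω)
    (I : EuclideanSpace ℝ (Fin n) → ℝ) (hI : MemLp I 2 (volume.restrict Ω))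
    (p : EuclideanSpace ℝ (Fin n) → ℝ) (hp : Measurable p)
    (pmin : ℝ) (h1 : 1 < pmin) (hbd : ∀ x ∈ Ω, pmin ≤ p x ∧ p x ≤ 2)
    (S : Set (EuclideanSpace ℝ (Fin n) → ℝ))
    (hS : S = {v | Differentiable ℝ v ∧
      IntegrableOn (fun x => ‖gradient v x‖ ^ (p x) / p x + (v x - I x) ^ 2 / 2) Ω}) :
    ConvexOn ℝ S (clrEnergy Ω p I) ∧
    ∀ u ∈ S, (∀ v ∈ S, clrEnergy Ω p I u ≤ clrEnergy Ω p I v) →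
      ∀ φ : EuclideanSpace ℝ (Fin n) → ℝ, ContDiff ℝ (⊤ : ℕ∞) φ → HasCompactSupport φ →
        tsupport φ ⊆ Ω →
        (∫ x in Ω, ‖gradient u x‖ ^ (p x - 2) * ⟪gradient u x, gradient φ x⟫) +
          (∫ x in Ω, (u x - I x) * φ x) = 0 := by
  subst hS
  have hΩm : MeasurableSet Ω := hΩo.measurableSet
  have hμfin : volume Ω < ⊤ := hΩb.measure_lt_top
  have hconstInt : ∀ c : ℝ, IntegrableOn (fun _ => c) Ω := fun c =>
    integrableOn_const hμfin.ne
  have hq1 : ∀ x ∈ Ω, 1 < p x := fun x hx => lt_of_lt_of_le h1 (hbd x hx).1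
  have hD0 : ∀ (v : EuclideanSpace ℝ (Fin n) → ℝ) (x), x ∈ Ω →
      0 ≤ ‖gradient v x‖ ^ p x / p x + (v x - I x) ^ 2 / 2 := by
    intro v x hx
    have h0 : (0:ℝ) < p x := lt_trans one_pos (hq1 x hx)
    positivity
  -- pointwise convexity of the density
  have hpt : ∀ (v w : EuclideanSpace ℝ (Fin n) → ℝ), Differentiable ℝ v → Differentiable ℝ w →
      ∀ s t : ℝ, 0 ≤ s → 0 ≤ t → s + t = 1 → ∀ x ∈ Ω,
      ‖gradient (s • v + t • w) x‖ ^ p x / p x + ((s • v + t • w) x - I x) ^ 2 / 2 ≤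
        s * (‖gradient v x‖ ^ p x / p x + (v x - I x) ^ 2 / 2) +
        t * (‖gradient w x‖ ^ p x / p x + (w x - I x) ^ 2 / 2) := by
    intro v w hv hw s t hs ht hst x hx
    have hx1 : 1 < p x := hq1 x hx
    have hx0 : (0:ℝ) < p x := lt_trans one_pos hx1
    have hgrad : gradient (s • v + t • w) x = s • gradient v x + t • gradient w x :=
      clr_gradient_combo (hv x) (hw x) s t
    have hA := clr_norm_combo_rpow_le (gradient v x) (gradient w x) hx1.le hs ht hst
    have hA2 : ‖s • gradient v x + t • gradient w x‖ ^ p x / p x ≤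
        s * (‖gradient v x‖ ^ p x / p x) + t * (‖gradient w x‖ ^ p x / p x) := by
      calc ‖s • gradient v x + t • gradient w x‖ ^ p x / p x
          ≤ (s * ‖gradient v x‖ ^ p x + t * ‖gradient w x‖ ^ p x) / p x := by gcongr
        _ = s * (‖gradient v x‖ ^ p x / p x) + t * (‖gradient w x‖ ^ p x / p x) := by ring
    have happ : (s • v + t • w) x = s * v x + t * w x := rfl
    have key : s * v x + t * w x - I x = s * (v x - I x) + t * (w x - I x) := by
      linear_combination (I x) * hst
    have hB : (s * (v x - I x) + t * (w x - I x)) ^ 2 ≤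
        s * (v x - I x) ^ 2 + t * (w x - I x) ^ 2 := by
      nlinarith [sq_nonneg (v x - I x - (w x - I x)), mul_nonneg hs ht]
    rw [hgrad, happ, key]
    linarith
  have hSconv : Convex ℝ {v : EuclideanSpace ℝ (Fin n) → ℝ | Differentiable ℝ v ∧
      IntegrableOn (fun x => ‖gradient v x‖ ^ (p x) / p x + (v x - I x) ^ 2 / 2) Ω} := by
    rintro v ⟨hv, hvi⟩ w ⟨hw, hwi⟩ s t hs ht hst
    have hdiff : Differentiable ℝ (s • v + t • w) := (hv.const_smul s).add (hw.const_smul t)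
    refine ⟨hdiff, ?_⟩
    have hmeas := clr_density_aesm hp hI.aestronglyMeasurable hdiff
    refine Integrable.mono' ((hvi.const_mul s).add (hwi.const_mul t)) hmeas ?_
    rw [ae_restrict_iff' hΩm]
    refine Filter.Eventually.of_forall fun x hx => ?_
    rw [Real.norm_of_nonneg (hD0 _ x hx)]
    exact hpt v w hv hw s t hs ht hst x hx
  constructor
  · refine ⟨hSconv, ?_⟩
    rintro v ⟨hv, hvi⟩ w ⟨hw, hwi⟩ s t hs ht hst
    obtain ⟨hcd, hci⟩ := hSconv ⟨hv, hvi⟩ ⟨hw, hwi⟩ hs ht hst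
    simp only [smul_eq_mul]
    unfold clrEnergy
    have hle : (∫ x in Ω, (‖gradient (s • v + t • w) x‖ ^ p x / p x +
        ((s • v + t • w) x - I x) ^ 2 / 2)) ≤
        ∫ x in Ω, (s * (‖gradient v x‖ ^ p x / p x + (v x - I x) ^ 2 / 2) +
          t * (‖gradient w x‖ ^ p x / p x + (w x - I x) ^ 2 / 2)) := by
      refine integral_mono_ae hci ((hvi.const_mul s).add (hwi.const_mul t)) ?_
      rw [Filter.EventuallyLE, ae_restrict_iff' hΩm]
      exact Filter.Eventually.of_forall fun x hx => hpt v w hv hw s t hs ht hst x hx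
    refine hle.trans ?_
    rw [integral_add (hvi.const_mul s) (hwi.const_mul t)]
    simp only [← smul_eq_mul, integral_smul]
    exact le_rfl
  · rintro u ⟨hud, hui⟩ hmin φ hφ hφc hφs
    have hφd : Differentiable ℝ φ := hφ.differentiable (by simp)
    obtain ⟨C1, hC1⟩ := hφc.exists_bound_of_continuous hφ.continuous
    obtain ⟨C2, hC2⟩ := (clr_gradient_compact_support hφc).exists_bound_of_continuous
      (clr_gradient_continuous hφ)
    set M : ℝ := max 1 (max C1 C2) with hM
    have hM1 : (1:ℝ) ≤ M := le_max_left _ _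
    have hM0 : (0:ℝ) ≤ M := by linarith
    have hφM : ∀ x, |φ x| ≤ M := by
      intro x
      have := hC1 x
      rw [Real.norm_eq_abs] at this
      exact this.trans ((le_max_left C1 C2).trans (le_max_right _ _))
    have hzM : ∀ x, ‖gradient φ x‖ ≤ M := fun x =>
      (hC2 x).trans ((le_max_right C1 C2).trans (le_max_right _ _))
    -- split the integrability of the density of u
    have hAmeas : Measurable fun x => ‖gradient u x‖ ^ p x / p x :=
      ((clr_measurable_gradient u).norm.pow hp).div hp
    have huA : IntegrableOn (fun x => ‖gradient u x‖ ^ p x / p x) Ω := by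
      refine clr_integrable_left hAmeas.aestronglyMeasurable ?_ ?_ hui
      · rw [ae_restrict_iff' hΩm]
        refine Filter.Eventually.of_forall fun x hx => ?_
        have h0 : (0:ℝ) < p x := lt_trans one_pos (hq1 x hx)
        positivity
      · refine Filter.Eventually.of_forall fun x => ?_
        positivity
    have huB : IntegrableOn (fun x => (u x - I x) ^ 2 / 2) Ω := by
      refine clr_integrable_right ?_ ?_ ?_ hui
      · have hsub := hud.continuous.aestronglyMeasurable.sub hI.aestronglyMeasurable
        simp only [pow_two, div_eq_mul_inv]
        exact ((hsub.mul hsub).mul_const _ : AEStronglyMeasurable _ (volume.restrict Ω))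
      · rw [ae_restrict_iff' hΩm]
        refine Filter.Eventually.of_forall fun x hx => ?_
        have h0 : (0:ℝ) < p x := lt_trans one_pos (hq1 x hx)
        positivity
      · refine Filter.Eventually.of_forall fun x => ?_
        positivity
    -- integrability of the gradient norm and of |u - I|
    have hWint : IntegrableOn (fun x => ‖gradient u x‖) Ω := by
      refine Integrable.mono' ((hconstInt 1).add (huA.const_mul 2))
        (clr_measurable_gradient u).norm.aestronglyMeasurable ?_
      rw [ae_restrict_iff' hΩm]
      refine Filter.Eventually.of_forall fun x hx => ?_
      have hx1 : 1 < p x := hq1 x hx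
      have hx2 : p x ≤ 2 := (hbd x hx).2
      have hx0 : (0:ℝ) < p x := lt_trans one_pos hx1
      have hXnn : 0 ≤ ‖gradient u x‖ ^ p x / p x := by positivity
      have hgoal : ‖gradient u x‖ ≤ 1 + 2 * (‖gradient u x‖ ^ p x / p x) := by
        rcases le_total ‖gradient u x‖ 1 with h | h
        · linarith
        · have e1 : ‖gradient u x‖ ≤ ‖gradient u x‖ ^ p x := by
            calc ‖gradient u x‖ = ‖gradient u x‖ ^ (1:ℝ) := (Real.rpow_one _).symm
            _ ≤ ‖gradient u x‖ ^ p x := Real.rpow_le_rpow_of_exponent_le h hx1.le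
          have e2 : ‖gradient u x‖ ^ p x = p x * (‖gradient u x‖ ^ p x / p x) := by
            field_simp
          nlinarith
      simp only [Pi.add_apply, norm_norm]
      exact hgoal
    have hUIint : IntegrableOn (fun x => |u x - I x|) Ω := by
      refine Integrable.mono' ((hconstInt 1).add (huB.const_mul 2))
        (hud.continuous.aestronglyMeasurable.sub hI.aestronglyMeasurable).norm ?_
      refine Filter.Eventually.of_forall fun x => ?_
      have hgoal : |u x - I x| ≤ 1 + 2 * ((u x - I x) ^ 2 / 2) := by
        nlinarith [sq_nonneg (|u x - I x| - 1), sq_abs (u x - I x), abs_nonneg (u x - I x)]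
      simp only [Pi.add_apply, Real.norm_eq_abs, abs_abs]
      exact hgoal
    -- every variation u + t φ lies in the admissible set
    have hmemt : ∀ t : ℝ, (fun x => u x + t * φ x) ∈
        {v : EuclideanSpace ℝ (Fin n) → ℝ | Differentiable ℝ v ∧
          IntegrableOn (fun x => ‖gradient v x‖ ^ (p x) / p x + (v x - I x) ^ 2 / 2) Ω} := by
      intro t
      have hdiff : Differentiable ℝ (fun x => u x + t * φ x) := hud.add (hφd.const_mul t)
      refine ⟨hdiff, ?_⟩
      have hmeas := clr_density_aesm hp hI.aestronglyMeasurable hdiff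
      refine Integrable.mono'
        ((huA.const_mul 8).add ((huB.const_mul 4).add (hconstInt (4 + 5 * (|t| * M) ^ 2))))
        hmeas ?_
      rw [ae_restrict_iff' hΩm]
      refine Filter.Eventually.of_forall fun x hx => ?_
      have hx1 : 1 < p x := hq1 x hx
      have hx2 : p x ≤ 2 := (hbd x hx).2
      have hx0 : (0:ℝ) < p x := lt_trans one_pos hx1
      rw [Real.norm_of_nonneg (hD0 _ x hx)]
      have hgr : gradient (fun y => u y + t * φ y) x = gradient u x + t • gradient φ x :=
        clr_gradient_add_smul (hud x) (hφd x) t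
      rw [hgr]
      have htM : 0 ≤ |t| * M := mul_nonneg (abs_nonneg t) hM0
      have hy : ‖gradient u x + t • gradient φ x‖ ≤ ‖gradient u x‖ + |t| * M := by
        refine (norm_add_le _ _).trans ?_
        rw [norm_smul, Real.norm_eq_abs]
        have := hzM x
        nlinarith [abs_nonneg t]
      have e1 : ‖gradient u x + t • gradient φ x‖ ^ p x ≤
          (‖gradient u x‖ + |t| * M) ^ p x :=
        Real.rpow_le_rpow (norm_nonneg _) hy hx0.le
      have e2 : (‖gradient u x‖ + |t| * M) ^ p x ≤
          4 * ‖gradient u x‖ ^ p x + 4 + 4 * (|t| * M) ^ 2 :=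
        clr_rpow_add_le (norm_nonneg _) htM hx1.le hx2
      have e4 : (0:ℝ) ≤ ‖gradient u x‖ ^ p x / p x := by positivity
      have e3 : ‖gradient u x‖ ^ p x = p x * (‖gradient u x‖ ^ p x / p x) := by field_simp
      have e6 : ‖gradient u x‖ ^ p x ≤ 2 * (‖gradient u x‖ ^ p x / p x) := by nlinarith
      have e5 : ‖gradient u x + t • gradient φ x‖ ^ p x / p x ≤
          4 * ‖gradient u x‖ ^ p x + 4 + 4 * (|t| * M) ^ 2 := by
        have h7 : ‖gradient u x + t • gradient φ x‖ ^ p x / p x ≤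
            (4 * ‖gradient u x‖ ^ p x + 4 + 4 * (|t| * M) ^ 2) / p x := by
          gcongr
          exact e1.trans e2
        refine h7.trans (div_le_self (by positivity) hx1.le)
      have f1 : |u x + t * φ x - I x| ≤ |u x - I x| + |t| * M := by
        have hrw : u x + t * φ x - I x = (u x - I x) + t * φ x := by ring
        rw [hrw]
        refine (abs_add_le _ _).trans ?_
        rw [abs_mul]
        have := hφM x
        nlinarith [abs_nonneg t]
      have f2 : (u x + t * φ x - I x) ^ 2 ≤ (|u x - I x| + |t| * M) ^ 2 := by
        rw [← sq_abs (u x + t * φ x - I x)]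
        exact pow_le_pow_left₀ (abs_nonneg _) f1 2
      have f3 : (|u x - I x| + |t| * M) ^ 2 ≤ 2 * (u x - I x) ^ 2 + 2 * (|t| * M) ^ 2 := by
        nlinarith [sq_abs (u x - I x), sq_nonneg (|u x - I x| - |t| * M)]
      have hBnn : (0:ℝ) ≤ (u x - I x) ^ 2 := sq_nonneg _
      have hgoal : ‖gradient u x + t • gradient φ x‖ ^ p x / p x +
          (u x + t * φ x - I x) ^ 2 / 2 ≤
          8 * (‖gradient u x‖ ^ p x / p x) +
            (4 * ((u x - I x) ^ 2 / 2) + (4 + 5 * (|t| * M) ^ 2)) := by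
        linarith
      exact hgoal
    -- the two component bounds on the derivative integrand
    have hcomp1 : ∀ x ∈ Ω, ∀ t : ℝ, |t| ≤ 1 →
        |‖gradient u x + t • gradient φ x‖ ^ (p x - 2) *
          ⟪gradient u x + t • gradient φ x, gradient φ x⟫| ≤
          M * (1 + (‖gradient u x‖ + M)) := by
      intro x hx t ht
      have hx1 : 1 < p x := hq1 x hx
      have hx2 : p x ≤ 2 := (hbd x hx).2
      have hy : ‖gradient u x + t • gradient φ x‖ ≤ ‖gradient u x‖ + M := by
        refine (norm_add_le _ _).trans ?_
        rw [norm_smul, Real.norm_eq_abs]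
        have h1 := hzM x
        nlinarith [norm_nonneg (gradient φ x), abs_nonneg t]
      have c1 : |‖gradient u x + t • gradient φ x‖ ^ (p x - 2) *
          ⟪gradient u x + t • gradient φ x, gradient φ x⟫| ≤
          ‖gradient u x + t • gradient φ x‖ ^ (p x - 1) * ‖gradient φ x‖ := by
        rw [abs_mul, abs_of_nonneg (Real.rpow_nonneg (norm_nonneg _) _)]
        exact clr_inner_bound hx1 _ _
      have c2 : ‖gradient u x + t • gradient φ x‖ ^ (p x - 1) ≤
          (‖gradient u x‖ + M) ^ (p x - 1) :=
        Real.rpow_le_rpow (norm_nonneg _) hy (by linarith)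
      have c3 : (‖gradient u x‖ + M) ^ (p x - 1) ≤ 1 + (‖gradient u x‖ + M) :=
        clr_rpow_le_one_add (by positivity) (by linarith) (by linarith)
      calc |‖gradient u x + t • gradient φ x‖ ^ (p x - 2) *
          ⟪gradient u x + t • gradient φ x, gradient φ x⟫|
          ≤ ‖gradient u x + t • gradient φ x‖ ^ (p x - 1) * ‖gradient φ x‖ := c1
        _ ≤ (1 + (‖gradient u x‖ + M)) * M := by
            have hnn : (0:ℝ) ≤ ‖gradient u x + t • gradient φ x‖ ^ (p x - 1) :=
              Real.rpow_nonneg (norm_nonneg _) _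
            have := hzM x
            nlinarith [norm_nonneg (gradient φ x), norm_nonneg (gradient u x)]
        _ = M * (1 + (‖gradient u x‖ + M)) := by ring
    have hcomp2 : ∀ (x : EuclideanSpace ℝ (Fin n)), ∀ t : ℝ, |t| ≤ 1 →
        |(u x + t * φ x - I x) * φ x| ≤ (|u x - I x| + M) * M := by
      intro x t ht
      rw [abs_mul]
      have f1 : |u x + t * φ x - I x| ≤ |u x - I x| + M := by
        have hrw : u x + t * φ x - I x = (u x - I x) + t * φ x := by ring
        rw [hrw]
        refine (abs_add_le _ _).trans ?_
        rw [abs_mul]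
        have := hφM x
        nlinarith [abs_nonneg t, abs_nonneg (φ x)]
      have := hφM x
      nlinarith [abs_nonneg (u x + t * φ x - I x), abs_nonneg (u x - I x), abs_nonneg (φ x)]
    -- the integrable bound
    have hbnd_int : Integrable (fun x => M * (1 + (‖gradient u x‖ + M)) +
        (|u x - I x| + M) * M) (volume.restrict Ω) := by
      refine Integrable.add ?_ ?_
      · exact (((hconstInt 1).add (hWint.add (hconstInt M))).const_mul M)
      · exact ((hUIint.add (hconstInt M)).mul_const M)
    -- derivative of the integrand
    have hdiffF : ∀ x ∈ Ω, ∀ t : ℝ,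
        HasDerivAt (fun s : ℝ => ‖gradient u x + s • gradient φ x‖ ^ p x / p x +
            (u x + s * φ x - I x) ^ 2 / 2)
          (‖gradient u x + t • gradient φ x‖ ^ (p x - 2) *
              ⟪gradient u x + t • gradient φ x, gradient φ x⟫ +
            (u x + t * φ x - I x) * φ x) t := by
      intro x hx t
      have hx1 : 1 < p x := hq1 x hx
      have hx0 : (0:ℝ) < p x := lt_trans one_pos hx1
      have hc : HasDerivAt (fun s : ℝ => gradient u x + s • gradient φ x) (gradient φ x) t := by
        simpa using ((hasDerivAt_id t).smul_const (gradient φ x)).const_add (gradient u x)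
      have h1 : HasDerivAt (fun s : ℝ => ‖gradient u x + s • gradient φ x‖ ^ p x)
          (((p x * ‖gradient u x + t • gradient φ x‖ ^ (p x - 2)) •
            innerSL ℝ (gradient u x + t • gradient φ x)) (gradient φ x)) t :=
        (hasFDerivAt_norm_rpow (gradient u x + t • gradient φ x) hx1).comp_hasDerivAt (x := t)
          (f := fun s : ℝ => gradient u x + s • gradient φ x) hc
      have h1' : HasDerivAt (fun s : ℝ => ‖gradient u x + s • gradient φ x‖ ^ p x / p x)
          (‖gradient u x + t • gradient φ x‖ ^ (p x - 2) *
            ⟪gradient u x + t • gradient φ x, gradient φ x⟫) t := by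
        have h2 := h1.div_const (p x)
        refine h2.congr_deriv ?_
        rw [ContinuousLinearMap.smul_apply, innerSL_apply_apply, smul_eq_mul]
        field_simp
      have h2base : HasDerivAt (fun s : ℝ => u x + s * φ x - I x) (φ x) t := by
        simpa using (((hasDerivAt_id t).mul_const (φ x)).const_add (u x)).sub_const (I x)
      have h2 : HasDerivAt (fun s : ℝ => (u x + s * φ x - I x) ^ 2 / 2)
          ((u x + t * φ x - I x) * φ x) t := by
        have h3 := (h2base.pow 2).div_const 2
        refine h3.congr_deriv ?_
        ring
      exact h1'.add h2
    -- apply the dominated-derivative theorem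
    have key := hasDerivAt_integral_of_dominated_loc_of_deriv_le
      (F := fun t x => ‖gradient u x + t • gradient φ x‖ ^ p x / p x +
        (u x + t * φ x - I x) ^ 2 / 2)
      (F' := fun t x => ‖gradient u x + t • gradient φ x‖ ^ (p x - 2) *
          ⟪gradient u x + t • gradient φ x, gradient φ x⟫ + (u x + t * φ x - I x) * φ x)
      (bound := fun x => M * (1 + (‖gradient u x‖ + M)) + (|u x - I x| + M) * M)
      (μ := volume.restrict Ω) (x₀ := (0:ℝ)) (s := Metric.ball 0 1) (Metric.ball_mem_nhds 0 zero_lt_one)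
      ?_ ?_ ?_ ?_ hbnd_int ?_
    · obtain ⟨hF'int, hder⟩ := key
      -- the function t ↦ energy of (u + t φ) has a local minimum at 0
      have hFeq : ∀ t : ℝ, clrEnergy Ω p I (fun x => u x + t * φ x) =
          ∫ x in Ω, (‖gradient u x + t • gradient φ x‖ ^ p x / p x +
            (u x + t * φ x - I x) ^ 2 / 2) := by
        intro t
        unfold clrEnergy
        refine integral_congr_ae (Filter.Eventually.of_forall fun x => ?_)
        simp only [clr_gradient_add_smul (hud x) (hφd x) t]
      have hU0 : clrEnergy Ω p I u =
          ∫ x in Ω, (‖gradient u x + (0:ℝ) • gradient φ x‖ ^ p x / p x +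
            (u x + 0 * φ x - I x) ^ 2 / 2) := by
        unfold clrEnergy
        refine integral_congr_ae (Filter.Eventually.of_forall fun x => ?_)
        norm_num
      have hlocmin : IsLocalMin (fun t : ℝ => ∫ x in Ω,
          (‖gradient u x + t • gradient φ x‖ ^ p x / p x +
            (u x + t * φ x - I x) ^ 2 / 2)) 0 := by
        refine Filter.Eventually.of_forall fun t => ?_
        show (∫ x in Ω, (‖gradient u x + (0:ℝ) • gradient φ x‖ ^ p x / p x +
            (u x + 0 * φ x - I x) ^ 2 / 2)) ≤
          ∫ x in Ω, (‖gradient u x + t • gradient φ x‖ ^ p x / p x +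
            (u x + t * φ x - I x) ^ 2 / 2)
        rw [← hU0, ← hFeq t]
        exact hmin _ (hmemt t)
      have hzero := hlocmin.hasDerivAt_eq_zero hder
      -- split the integral of the derivative
      have hint1 : Integrable (fun x => ‖gradient u x‖ ^ (p x - 2) *
          ⟪gradient u x, gradient φ x⟫) (volume.restrict Ω) := by
        refine Integrable.mono'
          ((((hconstInt 1).add (hWint.add (hconstInt M))).const_mul M)) ?_ ?_
        · exact (((clr_measurable_gradient u).norm.pow (hp.sub measurable_const)).mul
            ((clr_measurable_gradient u).inner (clr_measurable_gradient φ))).aestronglyMeasurable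
        · rw [ae_restrict_iff' hΩm]
          refine Filter.Eventually.of_forall fun x hx => ?_
          have h0 := hcomp1 x hx 0 (by simp)
          rw [zero_smul, add_zero] at h0
          simpa only [Real.norm_eq_abs, Pi.add_apply] using h0
      have hint2 : Integrable (fun x => (u x - I x) * φ x) (volume.restrict Ω) := by
        refine Integrable.mono' ((hUIint.add (hconstInt M)).mul_const M) ?_ ?_
        · exact (hud.continuous.aestronglyMeasurable.sub hI.aestronglyMeasurable).mul
            hφ.continuous.aestronglyMeasurable
        · refine Filter.Eventually.of_forall fun x => ?_
          have h0 := hcomp2 x 0 (by simp)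
          rw [zero_mul, add_zero] at h0
          simpa only [Real.norm_eq_abs, Pi.add_apply] using h0
      have hsplit : (∫ x in Ω, (‖gradient u x + (0:ℝ) • gradient φ x‖ ^ (p x - 2) *
            ⟪gradient u x + (0:ℝ) • gradient φ x, gradient φ x⟫ +
            (u x + 0 * φ x - I x) * φ x)) =
          (∫ x in Ω, ‖gradient u x‖ ^ (p x - 2) * ⟪gradient u x, gradient φ x⟫) +
            ∫ x in Ω, (u x - I x) * φ x := by
        have hfun : (fun x => ‖gradient u x + (0:ℝ) • gradient φ x‖ ^ (p x - 2) *
            ⟪gradient u x + (0:ℝ) • gradient φ x, gradient φ x⟫ +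
            (u x + 0 * φ x - I x) * φ x) =
            fun x => ‖gradient u x‖ ^ (p x - 2) * ⟪gradient u x, gradient φ x⟫ +
              (u x - I x) * φ x := by
          funext x
          norm_num
        rw [hfun, integral_add hint1 hint2]
      rw [← hsplit]
      exact hzero
    · exact Filter.Eventually.of_forall fun t => by
        have hdiff : Differentiable ℝ (fun x => u x + t * φ x) := hud.add (hφd.const_mul t)
        refine (clr_density_aesm hp hI.aestronglyMeasurable hdiff).congr
          (Filter.Eventually.of_forall fun x => ?_)
        simp only [clr_gradient_add_smul (hud x) (hφd x) t]
    · -- Integrable (F 0)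
      refine (hui.congr (Filter.Eventually.of_forall fun x => ?_))
      norm_num
    · -- AEStronglyMeasurable (F' 0)
      have hg : Measurable fun x => gradient u x + (0:ℝ) • gradient φ x :=
        (clr_measurable_gradient u).add ((clr_measurable_gradient φ).const_smul (0:ℝ))
      refine AEStronglyMeasurable.add ?_ ?_
      · exact ((hg.norm.pow (hp.sub measurable_const)).mul
          (hg.inner (clr_measurable_gradient φ))).aestronglyMeasurable
      · exact ((hud.continuous.aestronglyMeasurable.add
          (hφ.continuous.aestronglyMeasurable.const_mul 0)).sub
          hI.aestronglyMeasurable).mul hφ.continuous.aestronglyMeasurable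
    · -- bound
      rw [ae_restrict_iff' hΩm]
      refine Filter.Eventually.of_forall fun x hx => ?_
      intro t ht
      rw [Metric.mem_ball, Real.dist_0_eq_abs] at ht
      have h1 := hcomp1 x hx t ht.le
      have h2 := hcomp2 x t ht.le
      rw [Real.norm_eq_abs]
      calc |‖gradient u x + t • gradient φ x‖ ^ (p x - 2) *
            ⟪gradient u x + t • gradient φ x, gradient φ x⟫ + (u x + t * φ x - I x) * φ x|
          ≤ |‖gradient u x + t • gradient φ x‖ ^ (p x - 2) *
            ⟪gradient u x + t • gradient φ x, gradient φ x⟫| + |(u x + t * φ x - I x) * φ x| :=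
            abs_add_le _ _
        _ ≤ M * (1 + (‖gradient u x‖ + M)) + (|u x - I x| + M) * M := by linarith
    · -- differentiability
      rw [ae_restrict_iff' hΩm]
      refine Filter.Eventually.of_forall fun x hx => ?_
      intro t _
      exact hdiffF x hx t
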